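/- Let T be a normal, infinitely splitting ω₁-tree. Suppose α < ω₁, g is an automorphism of T_{≤α}, X is a finite subset of T_{α+1}, and for each x ∈ X and j ∈ {−1,1} we are given z^j_x ∈ T_{α+1} such that: g^j(x↾α) = (z^j_x)↾α; for distinct x₀, x₁ ∈ X and each j, z^j_{x₀} ≠ z^j_{x₁}; and if x₀ ∈ X, j ∈ {−1,1}, and z^j_{x₀} = x₁ ∈ X, then z^{−j}_{x₁} = x₀. Then there exists an automorphism h of T_{≤α+1} extending g such that h^j(x) = z^j_x for all x ∈ X and j ∈ {−1,1}. -/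

import Mathlib

/-!
Level `α + 1` is the disjoint union of the sets of immediate successors of the nodes `t` of
level `α`, each countably infinite. The hypotheses on `z` say exactly that
`x ↦ z¹_x`, `z⁻¹_x ↦ x` is a well-defined finite partial injection of level `α + 1` sending
successors of `t` to successors of `g t`. Since only finitely many values are prescribed, on
each successor set it extends to a bijection onto the successors of `g t`, and gluing these
bijections with `g` gives `h`.
-/

noncomputable section

open Cardinal Ordinal Set

/-- The height of a node of a tree. -/
noncomputable def treeHt {T : Type*} [PartialOrder T]
    (hwo : ∀ t : T, IsWellOrder {s : T // s < t} (fun a b => (a : T) < (b : T)))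
    (t : T) : Ordinal :=
  @Ordinal.type {s : T // s < t} (fun a b => (a : T) < (b : T)) (hwo t)

/-- `ω₁` as an ordinal. -/
noncomputable def w1 : Ordinal := (Cardinal.aleph 1).ord

/-- `g'`, an automorphism of `T_{≤ α+1}`, extends `g`, an automorphism of `T_{≤ α}`. -/
def ExtendsSucc {T : Type*} [PartialOrder T]
    (hwo : ∀ t : T, IsWellOrder {s : T // s < t} (fun a b => (a : T) < (b : T)))
    (α : Ordinal)
    (g : {t : T // treeHt hwo t ≤ α} ≃o {t : T // treeHt hwo t ≤ α})
    (g' : {t : T // treeHt hwo t ≤ α + 1} ≃o {t : T // treeHt hwo t ≤ α + 1}) : Prop :=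
  ∀ u : {t : T // treeHt hwo t ≤ α},
    g' ⟨(u : T), u.2.trans (le_self_add : α ≤ α + 1)⟩ =
      ⟨((g u : {t : T // treeHt hwo t ≤ α}) : T), (g u).2.trans (le_self_add : α ≤ α + 1)⟩

theorem exists_equiv_extend_of_finite {A B : Type*} [Countable A] [Infinite A] [Countable B]
    [Infinite B] {s : Set A} (hs : s.Finite) (f : s ↪ B) : ∃ e : A ≃ B, ∀ x : s, e x = f x :=
  Cardinal.extend_function_of_lt f (hs.lt_aleph0.trans_eq (Cardinal.mk_eq_aleph0 A).symm)
    nonempty_equiv_of_countable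

theorem exists_equiv_extend_fiberwise {β γ : Type*} [Countable β] (π : β → γ) (σ : γ ≃ γ)
    [∀ c, Infinite {b // π b = c}] {D : Set β} (hD : D.Finite) (f : D ↪ β)
    (hf : ∀ d, π (f d) = σ (π d)) :
    ∃ φ : β ≃ β, (∀ b, π (φ b) = σ (π b)) ∧ ∀ d : D, φ d = f d := by
  let fc (c : γ) : {b : {b // π b = c} | (b : β) ∈ D} ↪ {b // π b = σ c} :=
    ⟨fun b => ⟨f ⟨b, b.2⟩, by rw [hf, b.1.2]⟩, fun b b' h => by
      simpa [Subtype.ext_iff] using f.injective (Subtype.ext_iff.1 h)⟩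
  choose E hE using fun c =>
    exists_equiv_extend_of_finite (hD.preimage Subtype.val_injective.injOn) (fc c)
  let φ := (Equiv.sigmaFiberEquiv π).symm.trans
    ((Equiv.sigmaCongr σ E).trans (Equiv.sigmaFiberEquiv π))
  have hφ (b : β) : φ b = E (π b) ⟨b, rfl⟩ := rfl
  refine ⟨φ, fun b => (hφ b).symm ▸ (E _ _).2, fun d => ?_⟩
  rw [hφ, hE (π d) ⟨⟨d, rfl⟩, d.2⟩]
  rfl

theorem exists_injOn_of_prescribed {α : Type*} {X : Set α} {z : α → Bool → α}
    (hz_inj : ∀ x₀ ∈ X, ∀ x₁ ∈ X, x₀ ≠ x₁ → ∀ j : Bool, z x₀ j ≠ z x₁ j)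
    (hz_sym : ∀ x₀ ∈ X, ∀ j : Bool, ∀ x₁ ∈ X, z x₀ j = x₁ → z x₁ (!j) = x₀) :
    ∃ f : α → α, InjOn f (X ∪ (z · false) '' X) ∧ (∀ x ∈ X, f x = z x true) ∧
      ∀ x ∈ X, f (z x false) = x := by
  classical
  have z_inj {x₀ x₁ : α} (h₀ : x₀ ∈ X) (h₁ : x₁ ∈ X) (j : Bool) (h : z x₀ j = z x₁ j) : x₀ = x₁ :=
    by_contra fun hne => hz_inj x₀ h₀ x₁ h₁ hne j h
  let f (t : α) : α :=
    if t ∈ X then z t true else if h : ∃ x ∈ X, z x false = t then h.choose else t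
  have hf_X (x : α) (hx : x ∈ X) : f x = z x true := if_pos hx
  have hf_Z (x : α) (hx : x ∈ X) : f (z x false) = x := by
    by_cases hzx : z x false ∈ X
    · exact (hf_X _ hzx).trans (hz_sym x hx false _ hzx rfl)
    · have h : ∃ x' ∈ X, z x' false = z x false := ⟨x, hx, rfl⟩
      simp only [f, if_neg hzx, dif_pos h]
      exact z_inj h.choose_spec.1 hx false h.choose_spec.2
  refine ⟨f, ?_, hf_X, hf_Z⟩
  rintro t₀ (h₀ | ⟨x₀, h₀, rfl⟩) t₁ (h₁ | ⟨x₁, h₁, rfl⟩) h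
  · rw [hf_X t₀ h₀, hf_X t₁ h₁] at h
    exact z_inj h₀ h₁ true h
  · rw [hf_X t₀ h₀, hf_Z x₁ h₁] at h
    exact (hz_sym t₀ h₀ true x₁ h₁ h).symm
  · rw [hf_Z x₀ h₀, hf_X t₁ h₁] at h
    exact hz_sym t₁ h₁ true x₀ h₀ h.symm
  · rw [hf_Z x₀ h₀, hf_Z x₁ h₁] at h
    rw [h]

section Heights

variable {T : Type*} [PartialOrder T]
  (hwo : ∀ t : T, IsWellOrder {s : T // s < t} (fun a b => (a : T) < (b : T)))

theorem treeHt_eq_typein {s t : T} (h : s < t) :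
    treeHt hwo s = @typein {u : T // u < t} (fun a b => (a : T) < (b : T)) (hwo t) ⟨s, h⟩ := by
  rw [← @type_subrel _ _ (hwo t)]
  exact RelIso.ordinalType_congr
    ⟨⟨fun u => ⟨⟨u.1, u.2.trans h⟩, u.2⟩, fun u => ⟨u.1.1, u.2⟩, fun _ => rfl, fun _ => rfl⟩,
      Iff.rfl⟩

theorem treeHt_lt_treeHt {s t : T} (h : s < t) : treeHt hwo s < treeHt hwo t := by
  rw [treeHt_eq_typein hwo h]
  exact @typein_lt_type _ _ (hwo t) _

theorem not_le_of_treeHt_lt {s t : T} (h : treeHt hwo t < treeHt hwo s) : ¬ s ≤ t :=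
  fun hst => hst.eq_or_lt.elim (fun e => (e ▸ h).false)
    (fun hlt => (h.trans (treeHt_lt_treeHt hwo hlt)).false)

theorem le_iff_eq_of_treeHt_eq {s t : T} (h : treeHt hwo s = treeHt hwo t) : s ≤ t ↔ s = t :=
  ⟨fun hst => hst.eq_or_lt.resolve_right fun hlt => (h ▸ treeHt_lt_treeHt hwo hlt).false,
    fun e => e.le⟩

theorem le_of_lt_of_lt_of_treeHt_le {s p x : T} (hs : s < x) (hp : p < x)
    (h : treeHt hwo s ≤ treeHt hwo p) : s ≤ p := by
  rcases trichotomous_of (fun a b : {u : T // u < x} => (a : T) < (b : T)) ⟨s, hs⟩ ⟨p, hp⟩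
    with hlt | heq | hgt
  · exact hlt.le
  · exact (congrArg Subtype.val heq).le
  · exact absurd h (treeHt_lt_treeHt hwo hgt).not_ge

theorem exists_lt_treeHt_eq {x : T} {α : Ordinal} (h : α < treeHt hwo x) :
    ∃ p < x, treeHt hwo p = α := by
  obtain ⟨p, hp⟩ := @typein_surj _ _ (hwo x) _ h
  exact ⟨p.1, p.2, (treeHt_eq_typein hwo p.2).trans hp⟩

theorem treeHt_orderIso_apply {α : Ordinal}
    (G : {t : T // treeHt hwo t ≤ α} ≃o {t : T // treeHt hwo t ≤ α})
    (a : {t : T // treeHt hwo t ≤ α}) : treeHt hwo (G a : T) = treeHt hwo a := by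
  have below : ∀ {b : {t : T // treeHt hwo t ≤ α}} {s : T}, s < b → treeHt hwo s ≤ α :=
    fun {b} _ hs => ((treeHt_lt_treeHt hwo hs).trans_le b.2).le
  symm
  refine RelIso.ordinalType_congr
    ⟨⟨fun u => ⟨G ⟨u, below u.2⟩, G.lt_iff_lt.2 (show ⟨u, below u.2⟩ < a from u.2)⟩,
      fun v => ⟨G.symm ⟨v, below v.2⟩,
        by simpa using G.symm.lt_iff_lt.2 (show ⟨v, below v.2⟩ < G a from v.2)⟩,
      fun u => by simp, fun v => by simp⟩, ?_⟩
  intro u v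
  exact G.lt_iff_lt.trans Subtype.mk_lt_mk

end Heights

section Levels

variable {T : Type*} [PartialOrder T]
  (hwo : ∀ t : T, IsWellOrder {s : T // s < t} (fun a b => (a : T) < (b : T))) {α : Ordinal}

/-- `s↾α` in the usual notation. -/
def predAt (s : {s : T // treeHt hwo s = α + 1}) : {t : T // treeHt hwo t = α} :=
  ⟨_, (exists_lt_treeHt_eq hwo ((lt_add_one α).trans_eq s.2.symm)).choose_spec.2⟩

theorem predAt_lt (s : {s : T // treeHt hwo s = α + 1}) : (predAt hwo s : T) < s :=
  (exists_lt_treeHt_eq hwo ((lt_add_one α).trans_eq s.2.symm)).choose_spec.1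

theorem lt_iff_le_predAt (s : {s : T // treeHt hwo s = α + 1}) {t : T} (ht : treeHt hwo t ≤ α) :
    t < s ↔ t ≤ predAt hwo s :=
  ⟨fun h => le_of_lt_of_lt_of_treeHt_le hwo h (predAt_lt hwo s)
    (ht.trans_eq (predAt hwo s).2.symm), fun h => h.trans_lt (predAt_lt hwo s)⟩

theorem predAt_eq_iff (s : {s : T // treeHt hwo s = α + 1}) (t : {t : T // treeHt hwo t = α}) :
    predAt hwo s = t ↔ (t : T) < s := by
  rw [lt_iff_le_predAt hwo s t.2.le, le_iff_eq_of_treeHt_eq hwo (t.2.trans (predAt hwo s).2.symm),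
    eq_comm, Subtype.ext_iff]

theorem le_iff_le_predAt (s : {s : T // treeHt hwo s = α + 1}) {t : T} (ht : treeHt hwo t ≤ α) :
    t ≤ s ↔ t ≤ predAt hwo s :=
  have hts : t ≠ s :=
    ne_of_apply_ne (treeHt hwo) (ht.trans_lt ((lt_add_one α).trans_eq s.2.symm)).ne
  hts.le_iff_lt.trans (lt_iff_le_predAt hwo s ht)

def levelEquiv (g : {t : T // treeHt hwo t ≤ α} ≃o {t : T // treeHt hwo t ≤ α}) :
    {t : T // treeHt hwo t = α} ≃ {t : T // treeHt hwo t = α} where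
  toFun t := ⟨g ⟨t, t.2.le⟩, (treeHt_orderIso_apply hwo g _).trans t.2⟩
  invFun t := ⟨g.symm ⟨t, t.2.le⟩, (treeHt_orderIso_apply hwo g.symm _).trans t.2⟩
  left_inv t := by simp
  right_inv t := by simp

theorem levelEquiv_apply_coe (g : {t : T // treeHt hwo t ≤ α} ≃o {t : T // treeHt hwo t ≤ α})
    (t : {t : T // treeHt hwo t = α}) : (levelEquiv hwo g t : T) = g ⟨t, t.2.le⟩ := rfl

theorem infinite_predAt_fiber (c : {t : T // treeHt hwo t = α})
    (hc : {s : T | (c : T) < s ∧ treeHt hwo s = treeHt hwo c + 1}.Infinite) :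
    Infinite {s // predAt hwo s = c} := by
  have := hc.to_subtype
  refine .of_injective
    (fun s : {s // s ∈ {s : T | (c : T) < s ∧ treeHt hwo s = treeHt hwo c + 1}} =>
      ⟨⟨s, s.2.2.trans (by rw [c.2])⟩, (predAt_eq_iff hwo _ c).2 s.2.1⟩) fun s s' h => ?_
  exact Subtype.ext (congrArg (fun s => s.1.1) h)

end Levels

section Gluing

variable {T : Type*} [PartialOrder T]
  (hwo : ∀ t : T, IsWellOrder {s : T // s < t} (fun a b => (a : T) < (b : T))) {α : Ordinal}
  (g : {t : T // treeHt hwo t ≤ α} ≃o {t : T // treeHt hwo t ≤ α})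
  (φ : {s : T // treeHt hwo s = α + 1} ≃ {s : T // treeHt hwo s = α + 1})

def extendSucc (s : {t : T // treeHt hwo t ≤ α + 1}) : {t : T // treeHt hwo t ≤ α + 1} :=
  if hs : treeHt hwo s ≤ α then
    ⟨g ⟨s, hs⟩, ((treeHt_orderIso_apply hwo g _).trans_le hs).trans le_self_add⟩
  else ⟨φ ⟨s, s.2.antisymm (Order.add_one_le_of_lt (not_le.1 hs))⟩, (φ _).2.le⟩

variable {g φ}

theorem extendSucc_of_le {s : {t : T // treeHt hwo t ≤ α + 1}} (hs : treeHt hwo s ≤ α) :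
    (extendSucc hwo g φ s : T) = g ⟨s, hs⟩ := by
  simp only [extendSucc, dif_pos hs]

theorem extendSucc_of_eq (s : {s : T // treeHt hwo s = α + 1}) :
    (extendSucc hwo g φ ⟨s, s.2.le⟩ : T) = φ s := by
  have hs : ¬ treeHt hwo s ≤ α := fun h => (h.trans_lt ((lt_add_one α).trans_eq s.2.symm)).false
  simp only [extendSucc, dif_neg hs]

theorem treeHt_le_or_eq {s : T} (hs : treeHt hwo s ≤ α + 1) :
    treeHt hwo s ≤ α ∨ treeHt hwo s = α + 1 :=
  (le_or_gt _ α).imp_right fun h => hs.antisymm (Order.add_one_le_of_lt h)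

theorem extendSucc_le_extendSucc_iff
    (hφ : ∀ s, predAt hwo (φ s) = levelEquiv hwo g (predAt hwo s))
    (s u : {t : T // treeHt hwo t ≤ α + 1}) :
    extendSucc hwo g φ s ≤ extendSucc hwo g φ u ↔ s ≤ u := by
  obtain ⟨s, hs⟩ := s
  obtain ⟨u, hu⟩ := u
  rw [← Subtype.coe_le_coe, Subtype.mk_le_mk]
  rcases treeHt_le_or_eq hwo hs with hs | hs <;> rcases treeHt_le_or_eq hwo hu with hu | hu
  · rw [extendSucc_of_le hwo hs, extendSucc_of_le hwo hu, Subtype.coe_le_coe, g.le_iff_le,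
      Subtype.mk_le_mk]
  · have hgs : treeHt hwo (g ⟨s, hs⟩ : T) ≤ α := (treeHt_orderIso_apply hwo g _).trans_le hs
    rw [extendSucc_of_le hwo hs, extendSucc_of_eq hwo ⟨u, hu⟩, le_iff_le_predAt hwo _ hgs, hφ,
      le_iff_le_predAt hwo ⟨u, hu⟩ hs, levelEquiv_apply_coe, Subtype.coe_le_coe, g.le_iff_le,
      Subtype.mk_le_mk]
  · have hgu : treeHt hwo (g ⟨u, hu⟩ : T) < treeHt hwo (φ ⟨s, hs⟩ : T) := by
      rw [treeHt_orderIso_apply, (φ _).2]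
      exact hu.trans_lt (lt_add_one α)
    rw [extendSucc_of_eq hwo ⟨s, hs⟩, extendSucc_of_le hwo hu]
    exact iff_of_false (not_le_of_treeHt_lt hwo hgu)
      (not_le_of_treeHt_lt hwo (hs ▸ hu.trans_lt (lt_add_one α)))
  · rw [extendSucc_of_eq hwo ⟨s, hs⟩, extendSucc_of_eq hwo ⟨u, hu⟩,
      le_iff_eq_of_treeHt_eq hwo ((φ _).2.trans (φ _).2.symm),
      le_iff_eq_of_treeHt_eq hwo (hs.trans hu.symm), ← Subtype.ext_iff, φ.injective.eq_iff,
      Subtype.mk.injEq]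

theorem extendSucc_surjective : Function.Surjective (extendSucc hwo g φ) := by
  rintro ⟨u, hu⟩
  rcases treeHt_le_or_eq hwo hu with hu | hu
  · set s := g.symm ⟨u, hu⟩
    refine ⟨⟨s, s.2.trans le_self_add⟩, Subtype.ext ?_⟩
    rw [extendSucc_of_le hwo s.2]
    simp [s]
  · refine ⟨⟨φ.symm ⟨u, hu⟩, (φ.symm _).2.le⟩, Subtype.ext ?_⟩
    rw [extendSucc_of_eq hwo (φ.symm ⟨u, hu⟩), φ.apply_symm_apply]

theorem exists_orderIso_extendsSucc
    (hφ : ∀ s, predAt hwo (φ s) = levelEquiv hwo g (predAt hwo s)) :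
    ∃ h : {t : T // treeHt hwo t ≤ α + 1} ≃o {t : T // treeHt hwo t ≤ α + 1},
      ExtendsSucc hwo α g h ∧ ∀ s : {s : T // treeHt hwo s = α + 1}, (h ⟨s, s.2.le⟩ : T) = φ s :=
  ⟨.ofSurjective (.ofMapLEIff _ (extendSucc_le_extendSucc_iff hwo hφ)) (extendSucc_surjective hwo),
    fun u => Subtype.ext (extendSucc_of_le hwo u.2), extendSucc_of_eq hwo⟩

theorem exists_orderIso_extendsSucc_of_injOn
    (hcount : {t : T | treeHt hwo t = α + 1}.Countable)
    (hsplit : ∀ t : T, treeHt hwo t = α → {s : T | t < s ∧ treeHt hwo s = α + 1}.Infinite)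
    {D : Set T} (hD : D.Finite) (hD_lvl : ∀ t ∈ D, treeHt hwo t = α + 1)
    {f : T → T} (hf : InjOn f D) (hf_lvl : ∀ t ∈ D, treeHt hwo (f t) = α + 1)
    (hf_drop : ∀ t ∈ D, ∀ u v : {t : T // treeHt hwo t ≤ α}, (u : T) < t → treeHt hwo u = α →
      (v : T) < f t → treeHt hwo v = α → g u = v) :
    ∃ h : {t : T // treeHt hwo t ≤ α + 1} ≃o {t : T // treeHt hwo t ≤ α + 1},
      ExtendsSucc hwo α g h ∧ ∀ t (ht : t ∈ D), (h ⟨t, (hD_lvl t ht).le⟩ : T) = f t := by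
  have : Countable {s : T // treeHt hwo s = α + 1} := hcount.to_subtype
  have (c : {t : T // treeHt hwo t = α}) : Infinite {s // predAt hwo s = c} :=
    infinite_predAt_fiber hwo c (by rw [c.2]; exact hsplit c c.2)
  let F : (Subtype.val ⁻¹' D : Set {s : T // treeHt hwo s = α + 1}) ↪
      {s : T // treeHt hwo s = α + 1} :=
    ⟨fun d => ⟨f d, hf_lvl _ d.2⟩,
      fun d d' h => Subtype.ext (Subtype.ext (hf d.2 d'.2 (congrArg Subtype.val h)))⟩
  have hF (d) : predAt hwo (F d) = levelEquiv hwo g (predAt hwo d) :=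
    Subtype.ext (congrArg (fun v : {t : T // treeHt hwo t ≤ α} => (v : T))
      (hf_drop d d.2 ⟨_, (predAt hwo d).2.le⟩ ⟨_, (predAt hwo (F d)).2.le⟩ (predAt_lt hwo _)
        (predAt hwo _).2 (predAt_lt hwo _) (predAt hwo _).2)).symm
  obtain ⟨φ, hφ_pred, hφ_D⟩ := exists_equiv_extend_fiberwise (predAt hwo) (levelEquiv hwo g)
    (hD.preimage Subtype.val_injective.injOn) F hF
  obtain ⟨h, hgh, hφh⟩ := exists_orderIso_extendsSucc hwo hφ_pred
  exact ⟨h, hgh, fun t ht =>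
    (hφh ⟨t, hD_lvl t ht⟩).trans (congrArg Subtype.val (hφ_D ⟨⟨t, hD_lvl t ht⟩, ht⟩))⟩

end Gluing

theorem prescribed_automorphism_extension_general {T : Type*} [PartialOrder T]
    (hwo : ∀ t : T, IsWellOrder {s : T // s < t} (fun a b => (a : T) < (b : T)))
    -- `T` is an `ω₁`-tree:
    (hlevels_countable : ∀ α < w1, Set.Countable {t : T | treeHt hwo t = α})
    -- `T` is infinitely splitting:
    (hsplit : ∀ t : T, {s : T | t < s ∧ treeHt hwo s = treeHt hwo t + 1}.Infinite)
    (α : Ordinal) (hα : α < w1)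
    (g : {t : T // treeHt hwo t ≤ α} ≃o {t : T // treeHt hwo t ≤ α})
    (X : Set T) (hXfin : X.Finite) (hX : ∀ x ∈ X, treeHt hwo x = α + 1)
    (z : T → Bool → T)
    (hz_lvl : ∀ x ∈ X, ∀ j : Bool, treeHt hwo (z x j) = α + 1)
    -- `g^j(x↾α) = (z^j_x)↾α`:
    (hz_drop : ∀ x ∈ X, ∀ j : Bool,
      ∀ u v : {t : T // treeHt hwo t ≤ α}, (u : T) < x → treeHt hwo (u : T) = α →
        (v : T) < z x j → treeHt hwo (v : T) = α → (cond j g g.symm) u = v)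
    -- for distinct `x₀, x₁ ∈ X` and each `j`, `z^j_{x₀} ≠ z^j_{x₁}`:
    (hz_inj : ∀ x₀ ∈ X, ∀ x₁ ∈ X, x₀ ≠ x₁ → ∀ j : Bool, z x₀ j ≠ z x₁ j)
    -- if `z^j_{x₀} = x₁ ∈ X` then `z^{-j}_{x₁} = x₀`:
    (hz_sym : ∀ x₀ ∈ X, ∀ j : Bool, ∀ x₁ ∈ X, z x₀ j = x₁ → z x₁ (!j) = x₀) :
    ∃ h : {t : T // treeHt hwo t ≤ α + 1} ≃o {t : T // treeHt hwo t ≤ α + 1},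
      ExtendsSucc hwo α g h ∧
      ∀ x, ∀ hx : x ∈ X, ∀ j : Bool,
        (((cond j h h.symm) ⟨x, (hX x hx).le⟩ : {t : T // treeHt hwo t ≤ α + 1}) : T) = z x j := by
  obtain ⟨f, hf_inj, hf_X, hf_Z⟩ := exists_injOn_of_prescribed hz_inj hz_sym
  set D := X ∪ (z · false) '' X
  have hD_lvl : ∀ t ∈ D, treeHt hwo t = α + 1 := by
    rintro t (hx | ⟨x, hx, rfl⟩)
    exacts [hX t hx, hz_lvl x hx false]
  have hf_lvl : ∀ t ∈ D, treeHt hwo (f t) = α + 1 := by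
    rintro t (hx | ⟨x, hx, rfl⟩)
    · exact hf_X t hx ▸ hz_lvl t hx true
    · exact (hf_Z x hx).symm ▸ hX x hx
  have hf_drop : ∀ t ∈ D, ∀ u v : {t : T // treeHt hwo t ≤ α}, (u : T) < t →
      treeHt hwo u = α → (v : T) < f t → treeHt hwo v = α → g u = v := by
    rintro t (hx | ⟨x, hx, rfl⟩) u v hu huα hv hvα
    · exact hz_drop t hx true u v hu huα (hf_X t hx ▸ hv) hvα
    · exact (g.symm_apply_eq.1 (hz_drop x hx false v u (hf_Z x hx ▸ hv) hvα hu huα)).symm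
  obtain ⟨h, hgh, hh⟩ := exists_orderIso_extendsSucc_of_injOn hwo
    (hlevels_countable _ ((Cardinal.isSuccLimit_ord (Cardinal.aleph0_le_aleph 1)).add_one_lt hα))
    (fun t ht => ht ▸ hsplit t) (hXfin.union (hXfin.image _)) hD_lvl hf_inj hf_lvl hf_drop
  refine ⟨h, hgh, fun x hx j => ?_⟩
  cases j
  · have : h ⟨z x false, (hz_lvl x hx false).le⟩ = ⟨x, (hX x hx).le⟩ :=
      Subtype.ext ((hh _ (Or.inr ⟨x, hx, rfl⟩)).trans (hf_Z x hx))
    exact congrArg Subtype.val (h.symm_apply_eq.2 this.symm)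
  · exact (hh x (Or.inl hx)).trans (hf_X x hx)

/-- Proposition `prop: ext_prop`: Given an automorphism `g` of `T_{≤α}`, a
finite `X ⊆ T_{α+1}`, and prescribed values `z^j_x ∈ T_{α+1}` (for `x ∈ X`,
`j ∈ {-1,1}`, here coded by `Bool` with `true = 1`) satisfying the listed coherence
conditions, there is an automorphism `h` of `T_{≤α+1}` extending `g` with
`h^j(x) = z^j_x` for all `x ∈ X` and `j`. -/
theorem prescribed_automorphism_extension {T : Type*} [PartialOrder T]
    (hwo : ∀ t : T, IsWellOrder {s : T // s < t} (fun a b => (a : T) < (b : T)))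
    -- `T` is an `ω₁`-tree:
    (hht : ∀ t : T, treeHt hwo t < w1)
    (hlevels_countable : ∀ α < w1, Set.Countable {t : T | treeHt hwo t = α})
    (hlevels_ne : ∀ α < w1, ∃ t : T, treeHt hwo t = α)
    -- `T` is normal:
    (hnormal₁ : ∀ α β : Ordinal, α < β → β < w1 →
      ∀ t : T, treeHt hwo t = α → ∃ s : T, treeHt hwo s = β ∧ t < s)
    (hnormal₂ : ∀ β < w1, Order.IsSuccLimit β → ∀ s t : T, treeHt hwo s = β →
      treeHt hwo t = β → {u : T | u < s} = {u : T | u < t} → s = t)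
    -- `T` is infinitely splitting:
    (hsplit : ∀ t : T, {s : T | t < s ∧ treeHt hwo s = treeHt hwo t + 1}.Infinite)
    (α : Ordinal) (hα : α < w1)
    (g : {t : T // treeHt hwo t ≤ α} ≃o {t : T // treeHt hwo t ≤ α})
    (X : Set T) (hXfin : X.Finite) (hX : ∀ x ∈ X, treeHt hwo x = α + 1)
    (z : T → Bool → T)
    (hz_lvl : ∀ x ∈ X, ∀ j : Bool, treeHt hwo (z x j) = α + 1)
    -- `g^j(x↾α) = (z^j_x)↾α`:
    (hz_drop : ∀ x ∈ X, ∀ j : Bool,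
      ∀ u v : {t : T // treeHt hwo t ≤ α}, (u : T) < x → treeHt hwo (u : T) = α →
        (v : T) < z x j → treeHt hwo (v : T) = α → (cond j g g.symm) u = v)
    -- for distinct `x₀, x₁ ∈ X` and each `j`, `z^j_{x₀} ≠ z^j_{x₁}`:
    (hz_inj : ∀ x₀ ∈ X, ∀ x₁ ∈ X, x₀ ≠ x₁ → ∀ j : Bool, z x₀ j ≠ z x₁ j)
    -- if `z^j_{x₀} = x₁ ∈ X` then `z^{-j}_{x₁} = x₀`:
    (hz_sym : ∀ x₀ ∈ X, ∀ j : Bool, ∀ x₁ ∈ X, z x₀ j = x₁ → z x₁ (!j) = x₀) :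
    ∃ h : {t : T // treeHt hwo t ≤ α + 1} ≃o {t : T // treeHt hwo t ≤ α + 1},
      ExtendsSucc hwo α g h ∧
      ∀ x, ∀ hx : x ∈ X, ∀ j : Bool,
        (((cond j h h.symm) ⟨x, (hX x hx).le⟩ : {t : T // treeHt hwo t ≤ α + 1}) : T) = z x j :=
  prescribed_automorphism_extension_general hwo hlevels_countable hsplit α hα g X hXfin hX z hz_lvl
    hz_drop hz_inj hz_sym
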